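/- Let Γ be a girth-regular graph of valence k ≥ 3 and finite girth g, with signature (a_1, …, a_k), and let d = ⌊g/2⌋. Then a_k ≤ (k−1)^d; equivalently, every edge of Γ lies on at most (k−1)^d girth cycles. -/

import Mathlib

open SimpleGraph

/-- `s` is the edge set of some cycle of length `g` in `G`. -/
def IsGirthCycleEdgeSet {V : Type*} (G : SimpleGraph V) (g : ℕ) (s : Set (Sym2 V)) : Prop :=
  ∃ (u : V) (w : G.Walk u u), w.IsCycle ∧ w.length = g ∧ s = {e | e ∈ w.edges}

/-- The number of cycles of length `g` in `G` that contain the edge `e`. -/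
noncomputable def girthCycleCount {V : Type*} (G : SimpleGraph V) (g : ℕ) (e : Sym2 V) : ℕ :=
  Set.ncard {s : Set (Sym2 V) | IsGirthCycleEdgeSet G g s ∧ e ∈ s}

/-- The multiset of the numbers of `g`-cycles through the edges incident to `v`. -/
noncomputable def vertexSignature {V : Type*} [Fintype V] (G : SimpleGraph V) [DecidableRel G.Adj] (g : ℕ)
    (v : V) : Multiset ℕ :=
  ((G.neighborSet v).toFinite.toFinset.val).map fun u => girthCycleCount G g s(v, u)

/-!
Removing the edge `uv` from a girth cycle through it leaves a path `q` from `u` to `v` of length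
`g - 1`. The first `⌊g/2⌋` steps of `q` form a walk that never immediately backtracks and does not
start towards `v`; in a `k`-regular graph there are at most `(k-1)^⌊g/2⌋` of those. They determine
`q`: two different remainders would be paths with common ends and total length
`2(g - 1 - ⌊g/2⌋) < g`, and would therefore close a cycle shorter than the girth.
-/

open Finset

namespace SimpleGraph

variable {V : Type*} {G : SimpleGraph V} {u v : V}

namespace Walk

theorem IsPath.eq_of_length_add_lt_egirth {p q : G.Walk u v} (hp : p.IsPath) (hq : q.IsPath)
    (h : ((p.length + q.length : ℕ) : ℕ∞) < G.egirth) : p = q := by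
  by_contra hne
  obtain ⟨_, -, -, c, hc, hlen⟩ := hp.exists_isCycle_length_le_add_of_ne hq hne
  exact (egirth_le_length hc).not_gt (lt_of_le_of_lt (by exact_mod_cast hlen) h)

theorem IsPath.eq_of_support_take_eq {p q : G.Walk u v} (hp : p.IsPath) (hq : q.IsPath) {n : ℕ}
    (hlen : p.length = q.length) (hn : n ≤ p.length)
    (hg : ((2 * (p.length - n) : ℕ) : ℕ∞) < G.egirth)
    (htake : p.support.take (n + 1) = q.support.take (n + 1)) : p = q := by
  have hm : p.getVert n = q.getVert n := by
    have h := congrArg (·[n]?) htake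
    simp only [List.getElem?_take, Nat.lt_add_one, if_true] at h
    rw [← p.getVert_eq_support_getElem? hn, ← q.getVert_eq_support_getElem? (hlen ▸ hn)] at h
    exact Option.some_inj.mp h
  have hdrop : p.drop n = (q.drop n).copy hm.symm rfl :=
    (hp.drop n).eq_of_length_add_lt_egirth ((isPath_copy _ _ _).mpr (hq.drop n))
      (by simpa [hlen, two_mul] using hg)
  have hsupp := congrArg Walk.support hdrop
  simp only [drop_support_eq_support_drop_min, support_copy, ← hlen, min_eq_left hn] at hsupp
  apply ext_support
  rw [← List.take_append_drop (n + 1) p.support, ← List.take_append_drop (n + 1) q.support,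
    ← List.tail_drop, ← List.tail_drop, htake, hsupp]

theorem IsCycle.snd_eq_or_penultimate_eq {w : G.Walk u u} (hw : w.IsCycle)
    (he : s(u, v) ∈ w.edges) : w.snd = v ∨ w.penultimate = v := by
  cases w with
  | nil => simp at he
  | cons h t =>
    rw [cons_isCycle_iff] at hw
    rw [edges_cons, List.mem_cons] at he
    rcases he with he | he
    · left
      simpa using (Sym2.congr_right.mp he).symm
    · right
      have ht : ¬t.Nil := edges_eq_nil.not.mp (List.ne_nil_of_mem he)
      rw [penultimate_cons_of_not_nil _ _ ht]
      exact (hw.1.eq_penultimate_of_mem_edges he).symm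

theorem IsCycle.exists_isPath_of_mem_edges {w : G.Walk u u} (hw : w.IsCycle)
    (he : s(u, v) ∈ w.edges) :
    ∃ q : G.Walk u v, q.IsPath ∧ q.length + 1 = w.length ∧
      ∀ e, e ∈ w.edges ↔ e = s(u, v) ∨ e ∈ q.edges := by
  wlog hsnd : w.snd = v generalizing w
  · have hpen : w.penultimate = v := (hw.snd_eq_or_penultimate_eq he).resolve_left hsnd
    obtain ⟨q, hq, hlen, hedges⟩ :=
      this hw.reverse (by simpa using he) (by simpa using hpen)
    exact ⟨q, hq, by simpa using hlen, fun e => by simpa using hedges e⟩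
  cases w with
  | nil => simp at he
  | cons h t =>
    rw [snd_cons] at hsnd
    subst hsnd
    refine ⟨t.reverse, ((cons_isCycle_iff _ _).mp hw).1.reverse, by simp, fun e => ?_⟩
    simp

end Walk

section NonBacktracking

variable [DecidableEq V] [G.LocallyFinite]

variable (G) in
/-- The lists `[x₁, …, xₙ]` for which `y, x, x₁, …, xₙ` is a walk that never immediately
returns to the vertex it came from. -/
def nonBacktrackingLists : ℕ → V → V → Finset (List V)
  | 0, _, _ => {[]}
  | n + 1, x, y => ((G.neighborFinset x).erase y).biUnion fun z =>
      (nonBacktrackingLists n z x).image (z :: ·)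

theorem card_nonBacktrackingLists_le {k : ℕ} (hreg : G.IsRegularOfDegree k) (n : ℕ) {x y : V}
    (hxy : G.Adj x y) : #(G.nonBacktrackingLists n x y) ≤ (k - 1) ^ n := by
  induction n generalizing x y with
  | zero => simp [nonBacktrackingLists]
  | succ n ih =>
    have hcard : #((G.neighborFinset x).erase y) = k - 1 := by
      rw [card_erase_of_mem ((G.mem_neighborFinset x y).mpr hxy), card_neighborFinset_eq_degree,
        hreg x]
    calc #(G.nonBacktrackingLists (n + 1) x y)
        ≤ ∑ z ∈ (G.neighborFinset x).erase y, #((G.nonBacktrackingLists n z x).image (z :: ·)) :=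
          card_biUnion_le
      _ ≤ ∑ _z ∈ (G.neighborFinset x).erase y, (k - 1) ^ n := by
          refine sum_le_sum fun z hz => card_image_le.trans (ih ?_)
          exact ((G.mem_neighborFinset x z).mp (mem_of_mem_erase hz)).symm
      _ = (k - 1) ^ (n + 1) := by rw [sum_const, hcard, smul_eq_mul, pow_succ']

theorem Walk.IsPath.support_tail_mem_nonBacktrackingLists {x z y : V} {p : G.Walk x z}
    (hp : p.IsPath) (hy : p.snd ≠ y) : p.support.tail ∈ G.nonBacktrackingLists p.length x y := by
  induction p generalizing y with
  | nil => simp [nonBacktrackingLists]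
  | cons h t ih =>
    rw [cons_isPath_iff] at hp
    simp only [support_cons, List.tail_cons, length_cons, nonBacktrackingLists, mem_biUnion,
      mem_image, mem_erase, mem_neighborFinset]
    refine ⟨_, ⟨by simpa using hy, h⟩, t.support.tail, ih hp.1 ?_, t.cons_tail_support⟩
    exact fun hx => hp.2 (hx ▸ t.getVert_mem_support 1)

end NonBacktracking

end SimpleGraph

section GirthCycles

variable {V : Type*} {G : SimpleGraph V} {u v : V}

theorem exists_isPath_of_isGirthCycleEdgeSet {g : ℕ} {s : Set (Sym2 V)}
    (hs : IsGirthCycleEdgeSet G g s) (he : s(u, v) ∈ s) :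
    ∃ q : G.Walk u v, q.IsPath ∧ q.length + 1 = g ∧ s = insert s(u, v) {e | e ∈ q.edges} := by
  classical
  obtain ⟨c, w, hw, rfl, rfl⟩ := hs
  have hu : u ∈ w.support := w.fst_mem_support_of_mem_edges he
  have hrot := w.rotate_edges u hu
  obtain ⟨q, hq, hlen, hedges⟩ :=
    (hw.rotate hu).exists_isPath_of_mem_edges (hrot.mem_iff.mpr he)
  refine ⟨q, hq, by simpa using hlen, ?_⟩
  ext e
  simp [← hrot.mem_iff, hedges]

theorem encard_setOf_isPath_le [DecidableEq V] [G.LocallyFinite] {k g : ℕ}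
    (hreg : G.IsRegularOfDegree k) (hg : G.egirth = g) (huv : G.Adj u v) :
    {q : G.Walk u v | q.IsPath ∧ q.length + 1 = g}.encard ≤ ((k - 1) ^ (g / 2) : ℕ) := by
  have hg3 : 3 ≤ g := by exact_mod_cast hg ▸ G.three_le_egirth
  have hmaps : Set.MapsTo (fun q : G.Walk u v => (q.take (g / 2)).support.tail)
      {q | q.IsPath ∧ q.length + 1 = g} (G.nonBacktrackingLists (g / 2) u v) := by
    rintro q ⟨hq, hlen⟩
    have hsnd : (q.take (g / 2)).snd ≠ v := by
      rw [Walk.snd, Walk.take_getVert, min_eq_right (by omega)]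
      intro h
      have := hq.getVert_injOn (by simp; omega) (le_refl q.length) (h.trans q.getVert_length.symm)
      omega
    have h := (hq.take (g / 2)).support_tail_mem_nonBacktrackingLists hsnd
    rwa [Walk.take_length, min_eq_left (by omega)] at h
  have hinj : Set.InjOn (fun q : G.Walk u v => (q.take (g / 2)).support.tail)
      {q | q.IsPath ∧ q.length + 1 = g} := by
    rintro q ⟨hq, hlen⟩ q' ⟨hq', hlen'⟩ h
    refine hq.eq_of_support_take_eq hq' (n := g / 2) (by omega) (by omega) ?_ ?_
    · rw [hg]
      exact_mod_cast (by omega : 2 * (q.length - g / 2) < g)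
    · rw [← Walk.support_take, ← Walk.support_take, ← (q.take _).cons_tail_support,
        ← (q'.take _).cons_tail_support]
      exact congrArg (u :: ·) h
  calc {q : G.Walk u v | q.IsPath ∧ q.length + 1 = g}.encard
      ≤ (G.nonBacktrackingLists (g / 2) u v : Set (List V)).encard :=
        Set.encard_le_encard_of_injOn hmaps hinj
    _ = #(G.nonBacktrackingLists (g / 2) u v) := Set.encard_coe_eq_coe_finsetCard _
    _ ≤ ((k - 1) ^ (g / 2) : ℕ) := by exact_mod_cast card_nonBacktrackingLists_le hreg _ huv

theorem girthCycleCount_le [DecidableEq V] [G.LocallyFinite] {k g : ℕ}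
    (hreg : G.IsRegularOfDegree k) (hg : G.egirth = g) (huv : G.Adj u v) :
    girthCycleCount G g s(u, v) ≤ (k - 1) ^ (g / 2) := by
  have hsub : {s | IsGirthCycleEdgeSet G g s ∧ s(u, v) ∈ s} ⊆
      (fun q : G.Walk u v => insert s(u, v) {e | e ∈ q.edges}) ''
        {q | q.IsPath ∧ q.length + 1 = g} := by
    rintro s ⟨hs, he⟩
    obtain ⟨q, hq, hlen, rfl⟩ := exists_isPath_of_isGirthCycleEdgeSet hs he
    exact ⟨q, ⟨hq, hlen⟩, rfl⟩
  refine (Set.encard_le_coe_iff_finite_ncard_le.mp ?_).2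
  calc _ ≤ _ := Set.encard_le_encard hsub
    _ ≤ _ := Set.encard_image_le _ _
    _ ≤ _ := encard_setOf_isPath_le hreg hg huv

theorem mem_vertexSignature [Fintype V] [DecidableRel G.Adj] {g n : ℕ} {x : V} :
    n ∈ vertexSignature G g x ↔ ∃ y, G.Adj x y ∧ girthCycleCount G g s(x, y) = n := by
  simp [vertexSignature]

end GirthCycles

theorem stmt0_general {V : Type*} [Fintype V] (G : SimpleGraph V) [DecidableRel G.Adj] (k g : ℕ)
    (hreg : G.IsRegularOfDegree k) (hg : G.egirth = (g : ℕ∞))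
    (a : Fin k → ℕ)
    (hsig : ∀ v : V, vertexSignature G g v = Multiset.map a Finset.univ.val) :
    (∀ i : Fin k, a i ≤ (k - 1) ^ (g / 2)) ∧
      (∀ e ∈ G.edgeSet, girthCycleCount G g e ≤ (k - 1) ^ (g / 2)) := by
  classical
  have hedge : ∀ e ∈ G.edgeSet, girthCycleCount G g e ≤ (k - 1) ^ (g / 2) :=
    fun e => Sym2.ind (fun _ _ huv => girthCycleCount_le hreg hg huv) e
  refine ⟨fun i => ?_, hedge⟩
  obtain ⟨x, -⟩ := (exists_egirth_eq_length (G := G)).mpr fun hacyc => by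
    simp [egirth_eq_top.mpr hacyc] at hg
  have hi : a i ∈ vertexSignature G g x := hsig x ▸ Multiset.mem_map_of_mem a (mem_univ i)
  obtain ⟨y, hxy, hy⟩ := mem_vertexSignature.mp hi
  exact hy ▸ hedge _ hxy

/-- In a girth-regular graph of valence `k ≥ 3` and finite girth `g` with
signature `(a 0, …, a (k-1))`, every signature entry (in particular the largest, `a (k-1)`)
is at most `(k-1)^⌊g/2⌋`; equivalently, every edge lies on at most `(k-1)^⌊g/2⌋` girth
cycles. -/
theorem stmt0 {V : Type*} [Fintype V] (G : SimpleGraph V) [DecidableRel G.Adj] (k g : ℕ) (hk : 3 ≤ k)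
    (hreg : G.IsRegularOfDegree k) (hg : G.egirth = (g : ℕ∞))
    (a : Fin k → ℕ) (hmono : Monotone a)
    (hsig : ∀ v : V, vertexSignature G g v = Multiset.map a Finset.univ.val) :
    (∀ i : Fin k, a i ≤ (k - 1) ^ (g / 2)) ∧
      (∀ e ∈ G.edgeSet, girthCycleCount G g e ≤ (k - 1) ^ (g / 2)) :=
  stmt0_general G k g hreg hg a hsig
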